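/- Gradient of the regularized linear non-contrastive loss: let L(W^o, W^t) = 2 − 2 E⟨W^o D₁ x, W^t D₂ x⟩ + ((1−λ)/2)(‖W^o‖_F² + ‖W^t‖_F²), where x = Mz + ε with M column-orthonormal, E[z z^⊤] = κ I, E[z] = 0, ε ~ N(0, σ₀² I_p) independent of z, and D₁, D₂ are independent diagonal matrices with i.i.d. Bernoulli(α) diagonals, independent of x. Then ∇_{W^o} L = −2α²(κ W^t M M^⊤ + σ₀² W^t) + (1−λ) W^o. -/

import Mathlib

open MeasureTheory

/-- The probability weight of a particular diagonal Bernoulli(α) mask `D`. -/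
noncomputable def maskWeight {p : ℕ} (α : ℝ) (D : Fin p → Bool) : ℝ :=
  ∏ i, if D i then α else 1 - α

/-- Gradient of the regularized linear non-contrastive loss
`L(Wᵒ, Wᵗ) = 2 − 2 E⟨Wᵒ D₁ x, Wᵗ D₂ x⟩ + ((1−λ)/2)(‖Wᵒ‖_F² + ‖Wᵗ‖_F²)` with
`x = M z + ε`, `M` column-orthonormal, `E[z zᵀ] = κ I`, `E[z] = 0`,
`ε` centered with `E[ε εᵀ] = σ₀² I_p` and independent of `z` (encoded via vanishing
cross-moments), and independent Bernoulli(α) masks `D₁, D₂`.  Then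
`∇_{Wᵒ} L = −2α²(κ Wᵗ M Mᵀ + σ₀² Wᵗ) + (1−λ) Wᵒ`. -/
theorem gradient_linear_ncl_loss {m p d : ℕ} (α lam κ σ₀ : ℝ)
    (hα : 0 < α) (hα1 : α < 1) (hlam : 0 < lam) (hlam1 : lam < 1)
    (hκ : 0 < κ) (hσ : 0 ≤ σ₀)
    (M : Fin p → Fin d → ℝ)
    (hM : ∀ k l : Fin d, ∑ a, M a k * M a l = if k = l then (1 : ℝ) else 0)
    {Ω : Type*} [MeasureSpace Ω] (μ : Measure Ω) [IsProbabilityMeasure μ]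
    (z : Ω → Fin d → ℝ) (ε : Ω → Fin p → ℝ)
    (hzz_int : ∀ i j : Fin d, Integrable (fun ω => z ω i * z ω j) μ)
    (hzε_int : ∀ (i : Fin d) (a : Fin p), Integrable (fun ω => z ω i * ε ω a) μ)
    (hεε_int : ∀ a b : Fin p, Integrable (fun ω => ε ω a * ε ω b) μ)
    (hzz : ∀ i j : Fin d, ∫ ω, z ω i * z ω j ∂μ = if i = j then κ else 0)
    (hz : ∀ i : Fin d, ∫ ω, z ω i ∂μ = 0)
    (hεε : ∀ a b : Fin p, ∫ ω, ε ω a * ε ω b ∂μ = if a = b then σ₀ ^ 2 else 0)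
    (hε : ∀ a : Fin p, ∫ ω, ε ω a ∂μ = 0)
    (hzε : ∀ (i : Fin d) (a : Fin p), ∫ ω, z ω i * ε ω a ∂μ = 0)
    (x : Ω → Fin p → ℝ)
    (hx : ∀ ω a, x ω a = (∑ k, M a k * z ω k) + ε ω a)
    (Wt : Fin m → Fin p → ℝ)
    (L : (Fin m → Fin p → ℝ) → ℝ)
    (hL : ∀ W : Fin m → Fin p → ℝ, L W =
      2 - 2 * (∑ D₁ : Fin p → Bool, ∑ D₂ : Fin p → Bool,
        maskWeight α D₁ * maskWeight α D₂ *
          ∫ ω, ∑ i : Fin m,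
            (∑ j, W i j * (if D₁ j then 1 else 0) * x ω j) *
            (∑ j, Wt i j * (if D₂ j then 1 else 0) * x ω j) ∂μ) +
      (1 - lam) / 2 * ((∑ i, ∑ j, (W i j) ^ 2) + ∑ i, ∑ j, (Wt i j) ^ 2))
    (Wo : Fin m → Fin p → ℝ) :
    ∃ L' : (Fin m → Fin p → ℝ) →L[ℝ] ℝ, HasFDerivAt L L' Wo ∧
      ∀ H : Fin m → Fin p → ℝ, L' H = ∑ i, ∑ j,
        (-2 * α ^ 2 * (κ * (∑ k, (∑ a, Wt i a * M a k) * M j k) + σ₀ ^ 2 * Wt i j)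
          + (1 - lam) * Wo i j) * H i j := by
  classical
  -- covariance of x
  set C : Fin p → Fin p → ℝ :=
    fun a b => κ * (∑ k, M a k * M b k) + (if a = b then σ₀ ^ 2 else 0) with hCdef
  have hxrw : ∀ a b (ω : Ω), x ω a * x ω b =
      (∑ k, ∑ l, M a k * M b l * (z ω k * z ω l))
      + (∑ k, M a k * (z ω k * ε ω b))
      + (∑ l, M b l * (z ω l * ε ω a))
      + ε ω a * ε ω b := by
    intro a b ω
    have e1 : (∑ k, M a k * z ω k) * (∑ l, M b l * z ω l)
        = ∑ k, ∑ l, M a k * M b l * (z ω k * z ω l) := by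
      rw [Finset.sum_mul_sum]
      exact Finset.sum_congr rfl fun k _ => Finset.sum_congr rfl fun l _ => by ring
    have e2 : (∑ k, M a k * z ω k) * ε ω b = ∑ k, M a k * (z ω k * ε ω b) := by
      rw [Finset.sum_mul]
      exact Finset.sum_congr rfl fun k _ => by ring
    have e3 : ε ω a * (∑ l, M b l * z ω l) = ∑ l, M b l * (z ω l * ε ω a) := by
      rw [Finset.mul_sum]
      exact Finset.sum_congr rfl fun l _ => by ring
    rw [hx, hx, add_mul, mul_add, mul_add, e1, e2, e3]
    ring
  have i1 : ∀ a b : Fin p,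
      Integrable (fun ω => ∑ k, ∑ l, M a k * M b l * (z ω k * z ω l)) μ := fun a b =>
    integrable_finset_sum _ fun k _ => integrable_finset_sum _ fun l _ =>
      (hzz_int k l).const_mul _
  have i2 : ∀ a b : Fin p,
      Integrable (fun ω => ∑ k, M a k * (z ω k * ε ω b)) μ := fun a b =>
    integrable_finset_sum _ fun k _ => (hzε_int k b).const_mul _
  have i3 : ∀ a b : Fin p,
      Integrable (fun ω => ∑ l, M b l * (z ω l * ε ω a)) μ := fun a b =>
    integrable_finset_sum _ fun l _ => (hzε_int l a).const_mul _
  have hxx_int : ∀ a b : Fin p, Integrable (fun ω => x ω a * x ω b) μ := by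
    intro a b
    exact ((((i1 a b).add (i2 a b)).add (i3 a b)).add (hεε_int a b)).congr
      (Filter.Eventually.of_forall fun ω => (hxrw a b ω).symm)
  have hxx : ∀ a b : Fin p, ∫ ω, x ω a * x ω b ∂μ = C a b := by
    intro a b
    rw [integral_congr_ae (Filter.Eventually.of_forall (hxrw a b))]
    have j12 : Integrable (fun ω => (∑ k, ∑ l, M a k * M b l * (z ω k * z ω l))
        + ∑ k, M a k * (z ω k * ε ω b)) μ := (i1 a b).add (i2 a b)
    have j123 : Integrable (fun ω => ((∑ k, ∑ l, M a k * M b l * (z ω k * z ω l))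
        + ∑ k, M a k * (z ω k * ε ω b)) + ∑ l, M b l * (z ω l * ε ω a)) μ :=
      j12.add (i3 a b)
    rw [integral_add j123 (hεε_int a b), integral_add j12 (i3 a b),
      integral_add (i1 a b) (i2 a b)]
    have v1 : ∫ ω, ∑ k, ∑ l, M a k * M b l * (z ω k * z ω l) ∂μ
        = κ * ∑ k, M a k * M b k := by
      rw [integral_finset_sum _ fun k _ => integrable_finset_sum _ fun l _ =>
        (hzz_int k l).const_mul _]
      have e : ∀ k : Fin d, ∫ ω, ∑ l, M a k * M b l * (z ω k * z ω l) ∂μ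
          = κ * (M a k * M b k) := by
        intro k
        rw [integral_finset_sum _ fun l _ => (hzz_int k l).const_mul _]
        have e2 : ∀ l : Fin d, ∫ ω, M a k * M b l * (z ω k * z ω l) ∂μ
            = M a k * M b l * (if k = l then κ else 0) := fun l => by
          rw [integral_const_mul, hzz k l]
        rw [Finset.sum_congr rfl fun l _ => e2 l]
        simp [mul_ite, Finset.sum_ite_eq]
        ring
      rw [Finset.sum_congr rfl fun k _ => e k, ← Finset.mul_sum]
    have v2 : ∫ ω, ∑ k, M a k * (z ω k * ε ω b) ∂μ = 0 := by
      rw [integral_finset_sum _ fun k _ => (hzε_int k b).const_mul _]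
      simp [integral_const_mul, hzε]
    have v3 : ∫ ω, ∑ l, M b l * (z ω l * ε ω a) ∂μ = 0 := by
      rw [integral_finset_sum _ fun l _ => (hzε_int l a).const_mul _]
      simp [integral_const_mul, hzε]
    rw [v1, v2, v3, hεε a b]
    simp [hCdef]
  -- product of linear combinations of x
  have hexp : ∀ (c₁ c₂ : Fin p → ℝ) (ω : Ω),
      (∑ j, c₁ j * x ω j) * (∑ j, c₂ j * x ω j)
      = ∑ a, ∑ b, c₁ a * c₂ b * (x ω a * x ω b) := by
    intro c₁ c₂ ω
    rw [Finset.sum_mul_sum]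
    exact Finset.sum_congr rfl fun a _ => Finset.sum_congr rfl fun b _ => by ring
  have hprod_int : ∀ (c₁ c₂ : Fin p → ℝ),
      Integrable (fun ω => (∑ j, c₁ j * x ω j) * (∑ j, c₂ j * x ω j)) μ := by
    intro c₁ c₂
    exact (integrable_finset_sum _ fun a _ => integrable_finset_sum _ fun b _ =>
      (hxx_int a b).const_mul _).congr
      (Filter.Eventually.of_forall fun ω => (hexp c₁ c₂ ω).symm)
  have hprod : ∀ (c₁ c₂ : Fin p → ℝ),
      ∫ ω, (∑ j, c₁ j * x ω j) * (∑ j, c₂ j * x ω j) ∂μ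
      = ∑ a, ∑ b, c₁ a * c₂ b * C a b := by
    intro c₁ c₂
    rw [integral_congr_ae (Filter.Eventually.of_forall (hexp c₁ c₂))]
    rw [integral_finset_sum _ fun a _ => integrable_finset_sum _ fun b _ =>
      (hxx_int a b).const_mul _]
    refine Finset.sum_congr rfl fun a _ => ?_
    rw [integral_finset_sum _ fun b _ => (hxx_int a b).const_mul _]
    refine Finset.sum_congr rfl fun b _ => ?_
    rw [integral_const_mul, hxx a b]
  -- integral for fixed masks
  have hI : ∀ (W : Fin m → Fin p → ℝ) (D₁ D₂ : Fin p → Bool),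
      (∫ ω, ∑ i : Fin m,
        (∑ j, W i j * (if D₁ j then 1 else 0) * x ω j) *
        (∑ j, Wt i j * (if D₂ j then 1 else 0) * x ω j) ∂μ)
      = ∑ i, ∑ a, ∑ b, (W i a * (if D₁ a then 1 else 0)) *
          (Wt i b * (if D₂ b then 1 else 0)) * C a b := by
    intro W D₁ D₂
    rw [integral_finset_sum _ fun i _ =>
      hprod_int (fun j => W i j * (if D₁ j then 1 else 0))
        (fun j => Wt i j * (if D₂ j then 1 else 0))]
    exact Finset.sum_congr rfl fun i _ =>
      hprod (fun j => W i j * (if D₁ j then 1 else 0))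
        (fun j => Wt i j * (if D₂ j then 1 else 0))
  -- mask marginal
  have hmask : ∀ a : Fin p,
      (∑ D : Fin p → Bool, maskWeight α D * (if D a then 1 else 0)) = α := by
    intro a
    have e : ∀ D : Fin p → Bool, maskWeight α D * (if D a then 1 else 0)
        = ∏ i, ((if D i then α else 1 - α) *
            (if i = a then (if D i then (1:ℝ) else 0) else 1)) := by
      intro D
      rw [Finset.prod_mul_distrib, Finset.prod_ite_eq']
      simp [maskWeight]
    rw [Finset.sum_congr rfl fun D _ => e D]
    have := Finset.prod_univ_sum (fun _ : Fin p => (Finset.univ : Finset Bool))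
      (fun i b => (if b then α else 1 - α) *
        (if i = a then (if b then (1:ℝ) else 0) else 1))
    rw [Fintype.piFinset_univ] at this
    rw [← this]
    have e2 : ∀ i : Fin p, (∑ b : Bool, (if b then α else 1 - α) *
        (if i = a then (if b then (1:ℝ) else 0) else 1)) = if i = a then α else 1 := by
      intro i
      by_cases h : i = a <;> simp [h]
    rw [Finset.prod_congr rfl fun i _ => e2 i, Finset.prod_ite_eq']
    simp
  have mask_lin : ∀ c : Fin p → ℝ,
      (∑ D : Fin p → Bool, maskWeight α D * ∑ b, (if D b then 1 else 0) * c b)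
      = α * ∑ b, c b := by
    intro c
    calc (∑ D : Fin p → Bool, maskWeight α D * ∑ b, (if D b then 1 else 0) * c b)
        = ∑ D : Fin p → Bool, ∑ b, (maskWeight α D * (if D b then 1 else 0)) * c b := by
          refine Finset.sum_congr rfl fun D _ => ?_
          rw [Finset.mul_sum]
          exact Finset.sum_congr rfl fun b _ => by ring
      _ = ∑ b, ∑ D : Fin p → Bool, (maskWeight α D * (if D b then 1 else 0)) * c b :=
          Finset.sum_comm
      _ = ∑ b, α * c b := by
          refine Finset.sum_congr rfl fun b _ => ?_
          rw [← Finset.sum_mul, hmask b]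
      _ = α * ∑ b, c b := (Finset.mul_sum _ _ _).symm
  -- two-mask double sum
  have key2 : ∀ G : Fin p → Fin p → ℝ,
      (∑ D₁ : Fin p → Bool, ∑ D₂ : Fin p → Bool,
        maskWeight α D₁ * (maskWeight α D₂ *
          ∑ a, (if D₁ a then 1 else 0) * ∑ b, (if D₂ b then 1 else 0) * G a b))
      = α ^ 2 * ∑ a, ∑ b, G a b := by
    intro G
    have inner : ∀ D₁ : Fin p → Bool,
        (∑ D₂ : Fin p → Bool, maskWeight α D₂ *
          ∑ a, (if D₁ a then 1 else 0) * ∑ b, (if D₂ b then 1 else 0) * G a b)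
        = ∑ a, (if D₁ a then 1 else 0) * (α * ∑ b, G a b) := by
      intro D₁
      calc (∑ D₂ : Fin p → Bool, maskWeight α D₂ *
            ∑ a, (if D₁ a then 1 else 0) * ∑ b, (if D₂ b then 1 else 0) * G a b)
          = ∑ D₂ : Fin p → Bool, ∑ a, (if D₁ a then 1 else 0) *
              (maskWeight α D₂ * ∑ b, (if D₂ b then 1 else 0) * G a b) := by
            refine Finset.sum_congr rfl fun D₂ _ => ?_
            rw [Finset.mul_sum]
            exact Finset.sum_congr rfl fun a _ => by ring
        _ = ∑ a, ∑ D₂ : Fin p → Bool, (if D₁ a then 1 else 0) *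
              (maskWeight α D₂ * ∑ b, (if D₂ b then 1 else 0) * G a b) :=
            Finset.sum_comm
        _ = ∑ a, (if D₁ a then 1 else 0) * (α * ∑ b, G a b) := by
            refine Finset.sum_congr rfl fun a _ => ?_
            rw [← Finset.mul_sum, mask_lin (fun b => G a b)]
    calc (∑ D₁ : Fin p → Bool, ∑ D₂ : Fin p → Bool,
          maskWeight α D₁ * (maskWeight α D₂ *
            ∑ a, (if D₁ a then 1 else 0) * ∑ b, (if D₂ b then 1 else 0) * G a b))
        = ∑ D₁ : Fin p → Bool, maskWeight α D₁ *
            ∑ a, (if D₁ a then 1 else 0) * (α * ∑ b, G a b) := by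
          refine Finset.sum_congr rfl fun D₁ _ => ?_
          rw [← Finset.mul_sum, inner D₁]
      _ = α * ∑ a, α * ∑ b, G a b := mask_lin _
      _ = α ^ 2 * ∑ a, ∑ b, G a b := by
          simp only [Finset.mul_sum]
          exact Finset.sum_congr rfl fun a _ => Finset.sum_congr rfl fun b _ => by ring
  -- restructure triple sum
  have hre : ∀ (W : Fin m → Fin p → ℝ) (D₁ D₂ : Fin p → Bool),
      (∑ i, ∑ a, ∑ b, (W i a * (if D₁ a then 1 else 0)) *
        (Wt i b * (if D₂ b then 1 else 0)) * C a b)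
      = ∑ a, (if D₁ a then 1 else 0) *
          ∑ b, (if D₂ b then 1 else 0) * ((∑ i, W i a * Wt i b) * C a b) := by
    intro W D₁ D₂
    calc (∑ i, ∑ a, ∑ b, (W i a * (if D₁ a then 1 else 0)) *
          (Wt i b * (if D₂ b then 1 else 0)) * C a b)
        = ∑ a, ∑ i, ∑ b, (W i a * (if D₁ a then 1 else 0)) *
            (Wt i b * (if D₂ b then 1 else 0)) * C a b := Finset.sum_comm
      _ = ∑ a, ∑ b, ∑ i, (W i a * (if D₁ a then 1 else 0)) *
            (Wt i b * (if D₂ b then 1 else 0)) * C a b :=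
          Finset.sum_congr rfl fun a _ => Finset.sum_comm
      _ = ∑ a, (if D₁ a then 1 else 0) *
            ∑ b, (if D₂ b then 1 else 0) * ((∑ i, W i a * Wt i b) * C a b) := by
          refine Finset.sum_congr rfl fun a _ => ?_
          simp only [Finset.mul_sum, Finset.sum_mul]
          exact Finset.sum_congr rfl fun b _ => Finset.sum_congr rfl fun i _ => by ring
  -- the mask-averaged second moment
  have hS : ∀ W : Fin m → Fin p → ℝ,
      (∑ D₁ : Fin p → Bool, ∑ D₂ : Fin p → Bool,
        maskWeight α D₁ * maskWeight α D₂ *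
          ∫ ω, ∑ i : Fin m,
            (∑ j, W i j * (if D₁ j then 1 else 0) * x ω j) *
            (∑ j, Wt i j * (if D₂ j then 1 else 0) * x ω j) ∂μ)
      = α ^ 2 * ∑ a, ∑ b, (∑ i, W i a * Wt i b) * C a b := by
    intro W
    rw [← key2 (fun a b => (∑ i, W i a * Wt i b) * C a b)]
    refine Finset.sum_congr rfl fun D₁ _ => Finset.sum_congr rfl fun D₂ _ => ?_
    rw [hI W D₁ D₂, hre W D₁ D₂, mul_assoc]
  -- coefficient
  set c : Fin m → Fin p → ℝ := fun i j =>
    -2 * α ^ 2 * (κ * (∑ k, (∑ a, Wt i a * M a k) * M j k) + σ₀ ^ 2 * Wt i j) with hcdef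
  have hB : ∀ (i : Fin m) (a : Fin p),
      (∑ b, Wt i b * C a b)
      = κ * (∑ k, (∑ b, Wt i b * M b k) * M a k) + σ₀ ^ 2 * Wt i a := by
    intro i a
    calc (∑ b, Wt i b * C a b)
        = ∑ b, ((κ * ∑ k, (Wt i b * M b k) * M a k) +
            (if a = b then σ₀ ^ 2 * Wt i b else 0)) := by
          refine Finset.sum_congr rfl fun b _ => ?_
          simp only [hCdef]
          rw [mul_add]
          congr 1
          · simp only [Finset.mul_sum]
            exact Finset.sum_congr rfl fun k _ => by ring
          · by_cases h : a = b <;> simp [h] <;> ring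
      _ = (∑ b, κ * ∑ k, (Wt i b * M b k) * M a k) +
            ∑ b, (if a = b then σ₀ ^ 2 * Wt i b else 0) := Finset.sum_add_distrib
      _ = κ * (∑ k, (∑ b, Wt i b * M b k) * M a k) + σ₀ ^ 2 * Wt i a := by
          congr 1
          · rw [← Finset.mul_sum]
            congr 1
            rw [Finset.sum_comm]
            exact Finset.sum_congr rfl fun k _ => (Finset.sum_mul _ _ _).symm
          · rw [Finset.sum_ite_eq]
            simp
  have hlin : ∀ W : Fin m → Fin p → ℝ,
      -2 * (α ^ 2 * ∑ a, ∑ b, (∑ i, W i a * Wt i b) * C a b)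
      = ∑ i, ∑ j, c i j * W i j := by
    intro W
    have h1 : (∑ a, ∑ b, (∑ i, W i a * Wt i b) * C a b)
        = ∑ i, ∑ a, W i a *
            (κ * (∑ k, (∑ b, Wt i b * M b k) * M a k) + σ₀ ^ 2 * Wt i a) := by
      calc (∑ a, ∑ b, (∑ i, W i a * Wt i b) * C a b)
          = ∑ a, ∑ b, ∑ i, (W i a * Wt i b) * C a b :=
            Finset.sum_congr rfl fun a _ => Finset.sum_congr rfl fun b _ =>
              Finset.sum_mul _ _ _
        _ = ∑ a, ∑ i, ∑ b, (W i a * Wt i b) * C a b :=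
            Finset.sum_congr rfl fun a _ => Finset.sum_comm
        _ = ∑ i, ∑ a, ∑ b, (W i a * Wt i b) * C a b := Finset.sum_comm
        _ = ∑ i, ∑ a, W i a * ∑ b, Wt i b * C a b := by
            refine Finset.sum_congr rfl fun i _ => Finset.sum_congr rfl fun a _ => ?_
            rw [Finset.mul_sum]
            exact Finset.sum_congr rfl fun b _ => by ring
        _ = ∑ i, ∑ a, W i a *
              (κ * (∑ k, (∑ b, Wt i b * M b k) * M a k) + σ₀ ^ 2 * Wt i a) :=
            Finset.sum_congr rfl fun i _ => Finset.sum_congr rfl fun a _ => by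
              rw [hB i a]
    rw [h1]
    rw [show ∀ t : ℝ, -2 * (α ^ 2 * t) = -2 * α ^ 2 * t from fun t => by ring]
    rw [Finset.mul_sum]
    refine Finset.sum_congr rfl fun i _ => ?_
    rw [Finset.mul_sum]
    refine Finset.sum_congr rfl fun a _ => ?_
    simp only [hcdef]
    ring
  -- the polynomial form of L
  set K : ℝ := 2 + (1 - lam) / 2 * ∑ i, ∑ j, (Wt i j) ^ 2 with hKdef
  set F : (Fin m → Fin p → ℝ) → ℝ := fun W =>
    K + ∑ i, ∑ j, (c i j * W i j + (1 - lam) / 2 * (W i j) ^ 2) with hFdef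
  have hLF : L = F := by
    funext W
    rw [hL W, hFdef]
    simp only
    rw [hS W, hKdef]
    have hsplit : (∑ i, ∑ j, (c i j * W i j + (1 - lam) / 2 * (W i j) ^ 2))
        = (∑ i, ∑ j, c i j * W i j) + (1 - lam) / 2 * ∑ i, ∑ j, (W i j) ^ 2 := by
      rw [Finset.mul_sum]
      rw [← Finset.sum_add_distrib]
      refine Finset.sum_congr rfl fun i _ => ?_
      rw [Finset.mul_sum, ← Finset.sum_add_distrib]
    rw [hsplit, ← hlin W]
    ring
  -- the derivative
  have hπ : ∀ (i : Fin m) (j : Fin p),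
      HasFDerivAt (fun W : Fin m → Fin p → ℝ => W i j)
        ((ContinuousLinearMap.proj j).comp
          (ContinuousLinearMap.proj (R := ℝ) (φ := fun _ : Fin m => Fin p → ℝ) i)) Wo :=
    fun i j => ((ContinuousLinearMap.proj j).comp
      (ContinuousLinearMap.proj (R := ℝ) (φ := fun _ : Fin m => Fin p → ℝ) i)).hasFDerivAt
  refine ⟨∑ i, ∑ j,
      (c i j • ((ContinuousLinearMap.proj j).comp
          (ContinuousLinearMap.proj (R := ℝ) (φ := fun _ : Fin m => Fin p → ℝ) i))
        + ((1 - lam) / 2) •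
          (Wo i j • ((ContinuousLinearMap.proj j).comp
              (ContinuousLinearMap.proj (R := ℝ) (φ := fun _ : Fin m => Fin p → ℝ) i))
           + Wo i j • ((ContinuousLinearMap.proj j).comp
              (ContinuousLinearMap.proj (R := ℝ) (φ := fun _ : Fin m => Fin p → ℝ) i)))),
    ?_, ?_⟩
  · rw [hLF, hFdef]
    refine HasFDerivAt.const_add K ?_
    refine HasFDerivAt.fun_sum fun i _ => HasFDerivAt.fun_sum fun j _ => ?_
    have h2 : HasFDerivAt (fun W : Fin m → Fin p → ℝ => (W i j) ^ 2)
        (Wo i j • ((ContinuousLinearMap.proj j).comp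
            (ContinuousLinearMap.proj (R := ℝ) (φ := fun _ : Fin m => Fin p → ℝ) i))
         + Wo i j • ((ContinuousLinearMap.proj j).comp
            (ContinuousLinearMap.proj (R := ℝ) (φ := fun _ : Fin m => Fin p → ℝ) i))) Wo := by
      simpa only [pow_two] using (hπ i j).fun_mul (hπ i j)
    exact ((hπ i j).const_mul (c i j)).add (h2.const_mul ((1 - lam) / 2))
  · intro H
    simp only [ContinuousLinearMap.coe_sum', Finset.sum_apply,
      ContinuousLinearMap.add_apply, ContinuousLinearMap.smul_apply,
      ContinuousLinearMap.coe_comp', Function.comp_apply,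
      ContinuousLinearMap.proj_apply, smul_eq_mul]
    refine Finset.sum_congr rfl fun i _ => Finset.sum_congr rfl fun j _ => ?_
    simp only [hcdef]
    ring
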